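/- arXiv:2511.13034 — 9 statements merged into one kernel-verified Lean document; each statement's English description precedes it below -/
import Mathlib

section
/- Let E be a real Hilbert space, T ⊆ E a nonempty closed convex set, and x ∈ E with x ∉ T. Let p = Π_T(x) be the metric projection of x onto T and λ = (p − x)/‖p − x‖. If y ∈ E satisfies ⟨y − p, λ⟩ ≥ 0, then for all real weights a > 0 and b > 0, the point z = (a·x + b·y)/(a + b) satisfies D(z,T)² ≤ (a/(a+b))²·D(x,T)² + (b/(a+b))²·‖y − p‖². -/
open scoped RealInnerProductSpace

/-! With `p = Π_T(x)`, the vector `z - p` is the combination `α • (x - p) + β • (y - p)` with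
`α, β ≥ 0`, and the hypothesis on `y` says that `x - p` and `y - p` make an obtuse angle, so the
cross term in `‖z - p‖²` is nonpositive. Since `p ∈ T`, `D(z,T) ≤ ‖z - p‖`, while `D(x,T) = ‖x - p‖`. -/

theorem Metric.infDist_eq_norm_sub_of_forall_norm_sub_le {E : Type*} [SeminormedAddCommGroup E]
    {s : Set E} {x p : E} (hp : p ∈ s) (h : ∀ q ∈ s, ‖x - p‖ ≤ ‖x - q‖) :
    Metric.infDist x s = ‖x - p‖ :=
  le_antisymm (by simpa [dist_eq_norm] using Metric.infDist_le_dist_of_mem hp)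
    ((Metric.le_infDist ⟨p, hp⟩).2 fun q hq => by simpa [dist_eq_norm] using h q hq)

section InnerProductSpace

variable {F : Type*} [NormedAddCommGroup F] [InnerProductSpace ℝ F]

theorem real_inner_nonneg_of_inner_inv_norm_smul_nonneg {w v : F}
    (h : 0 ≤ ⟪w, ‖v‖⁻¹ • v⟫) : 0 ≤ ⟪w, v⟫ := by
  rw [real_inner_smul_right] at h
  rcases (norm_nonneg v).eq_or_lt with hv | hv
  · simp [norm_eq_zero.1 hv.symm]
  · exact (mul_nonneg_iff_of_pos_left (inv_pos.2 hv)).1 h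

theorem norm_smul_add_smul_sq_le_of_inner_nonpos {u v : F} (huv : ⟪u, v⟫ ≤ 0) {α β : ℝ}
    (hαβ : 0 ≤ α * β) :
    ‖α • u + β • v‖ ^ 2 ≤ α ^ 2 * ‖u‖ ^ 2 + β ^ 2 * ‖v‖ ^ 2 := by
  rw [norm_add_sq_real, norm_smul, norm_smul, real_inner_smul_left, real_inner_smul_right,
    mul_pow, mul_pow, Real.norm_eq_abs, Real.norm_eq_abs, sq_abs, sq_abs]
  nlinarith [mul_nonpos_of_nonneg_of_nonpos hαβ huv]

end InnerProductSpace

theorem inv_smul_add_smul_sub_eq {V : Type*} [AddCommGroup V] [Module ℝ V] {a b : ℝ}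
    (hab : a + b ≠ 0) (x y p : V) :
    (a + b)⁻¹ • (a • x + b • y) - p = (a / (a + b)) • (x - p) + (b / (a + b)) • (y - p) := by
  match_scalars <;> field_simp; ring

theorem stmt_0_general {E : Type*} [NormedAddCommGroup E] [InnerProductSpace ℝ E]
    (T : Set E)
    (x : E)
    (p : E) (hpT : p ∈ T) (hp : ∀ q ∈ T, ‖x - p‖ ≤ ‖x - q‖)
    (lam : E) (hlam : lam = ‖p - x‖⁻¹ • (p - x))
    (y : E) (hy : 0 ≤ ⟪y - p, lam⟫)
    (a b : ℝ) (ha : 0 < a) (hb : 0 < b)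
    (z : E) (hz : z = (a + b)⁻¹ • (a • x + b • y)) :
    Metric.infDist z T ^ 2 ≤
      (a / (a + b)) ^ 2 * Metric.infDist x T ^ 2 + (b / (a + b)) ^ 2 * ‖y - p‖ ^ 2 := by
  subst hlam hz
  have hab : 0 < a + b := add_pos ha hb
  have hobtuse : ⟪x - p, y - p⟫ ≤ 0 := by
    have := real_inner_nonneg_of_inner_inv_norm_smul_nonneg hy
    rw [← neg_sub x p, real_inner_comm, inner_neg_left] at this
    linarith
  have hzT : Metric.infDist ((a + b)⁻¹ • (a • x + b • y)) T
      ≤ ‖(a + b)⁻¹ • (a • x + b • y) - p‖ := by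
    simpa [dist_eq_norm] using Metric.infDist_le_dist_of_mem hpT
  rw [Metric.infDist_eq_norm_sub_of_forall_norm_sub_le hpT hp]
  calc Metric.infDist ((a + b)⁻¹ • (a • x + b • y)) T ^ 2
      ≤ ‖(a / (a + b)) • (x - p) + (b / (a + b)) • (y - p)‖ ^ 2 := by
        rw [← inv_smul_add_smul_sub_eq hab.ne']
        exact pow_le_pow_left₀ Metric.infDist_nonneg hzT 2
    _ ≤ _ := norm_smul_add_smul_sq_le_of_inner_nonpos hobtuse (by positivity)

/-- one-step approachability recursion for arbitrary positive weights. -/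
theorem stmt_0 {E : Type*} [NormedAddCommGroup E] [InnerProductSpace ℝ E] [CompleteSpace E]
    (T : Set E) (hTne : T.Nonempty) (hTclosed : IsClosed T) (hTconv : Convex ℝ T)
    (x : E) (hx : x ∉ T)
    (p : E) (hpT : p ∈ T) (hp : ∀ q ∈ T, ‖x - p‖ ≤ ‖x - q‖)
    (lam : E) (hlam : lam = ‖p - x‖⁻¹ • (p - x))
    (y : E) (hy : 0 ≤ ⟪y - p, lam⟫)
    (a b : ℝ) (ha : 0 < a) (hb : 0 < b)
    (z : E) (hz : z = (a + b)⁻¹ • (a • x + b • y)) :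
    Metric.infDist z T ^ 2 ≤
      (a / (a + b)) ^ 2 * Metric.infDist x T ^ 2 + (b / (a + b)) ^ 2 * ‖y - p‖ ^ 2 :=
  stmt_0_general T x p hpT hp lam hlam y hy a b ha hb z hz
end

section
/- Let E be a real Hilbert space, M > 0, and T ⊆ E a nonempty closed convex set contained in the closed ball of radius M centered at 0. Let (y_t)_{t≥1} be a sequence in E with ‖y_t‖ ≤ M for all t, and let x̄_t = (1/t)·Σ_{s=1}^{t} y_s be the running averages. Suppose the Blackwell condition holds at every step: for every t ≥ 1 with x̄_t ∉ T, ⟨y_{t+1} − Π_T(x̄_t), λ_{x̄_t}⟩ ≥ 0, where λ_{x̄_t} = (Π_T(x̄_t) − x̄_t)/‖Π_T(x̄_t) − x̄_t‖. Then for every t ≥ 1, D(x̄_t, T)² ≤ 4M²/t. -/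
/-!
Let `dₜ = ‖x̄ₜ - Π(x̄ₜ)‖`. Since `(t+1) x̄ₜ₊₁ = t x̄ₜ + yₜ₊₁`, measuring `x̄ₜ₊₁` against the old
projection `Π(x̄ₜ)` gives `(t+1)² d²ₜ₊₁ ≤ t² d²ₜ + 2t ⟪x̄ₜ - Π(x̄ₜ), yₜ₊₁ - Π(x̄ₜ)⟫ + (2M)²`, and the
Blackwell condition says exactly that the cross term is nonpositive. Hence `t d²ₜ ≤ 4M²` by
induction.
-/

open scoped RealInnerProductSpace

section InnerProductSpace

variable {E : Type*} [NormedAddCommGroup E] [InnerProductSpace ℝ E]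

lemma norm_smul_add_sq_le {c : ℝ} {u v : E} (h : c * ⟪u, v⟫ ≤ 0) :
    ‖c • u + v‖ ^ 2 ≤ c ^ 2 * ‖u‖ ^ 2 + ‖v‖ ^ 2 := by
  rw [norm_add_sq_real, real_inner_smul_left, norm_smul, mul_pow, Real.norm_eq_abs, sq_abs]
  linarith

lemma inner_sub_proj_nonpos {T : Set E} {proj : E → E}
    (hproj : ∀ s, ∀ q ∈ T, ‖s - proj s‖ ≤ ‖s - q‖) {a z : E}
    (hBlackwell : a ∉ T → 0 ≤ ⟪z - proj a, ‖proj a - a‖⁻¹ • (proj a - a)⟫) :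
    ⟪a - proj a, z - proj a⟫ ≤ 0 := by
  by_cases ha : a ∈ T
  · have : a - proj a = 0 := norm_le_zero_iff.mp (by simpa using hproj a a ha)
    simp [this]
  have hinner : 0 ≤ ⟪z - proj a, proj a - a⟫ := by
    rcases eq_or_ne (proj a - a) 0 with h0 | h0
    · simp [h0]
    have := hBlackwell ha
    rw [real_inner_smul_right] at this
    exact nonneg_of_mul_nonneg_right this (inv_pos.mpr (norm_pos_iff.mpr h0))
  rw [← neg_sub (proj a) a, inner_neg_left, real_inner_comm]
  linarith

end InnerProductSpace

section RunningAverage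

variable {E : Type*} [AddCommGroup E] [Module ℝ E] {y xbar : ℕ → E}

lemma natCast_smul_eq_sum (hxbar : ∀ t, xbar t = (t : ℝ)⁻¹ • ∑ s ∈ Finset.Icc 1 t, y s) (t : ℕ) :
    (t : ℝ) • xbar t = ∑ s ∈ Finset.Icc 1 t, y s := by
  rcases Nat.eq_zero_or_pos t with rfl | ht
  · simp
  · rw [hxbar, smul_inv_smul₀ (by positivity)]

lemma succ_smul_eq_smul_add (hxbar : ∀ t, xbar t = (t : ℝ)⁻¹ • ∑ s ∈ Finset.Icc 1 t, y s)
    (t : ℕ) : ((t : ℝ) + 1) • xbar (t + 1) = (t : ℝ) • xbar t + y (t + 1) := by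
  rw [← Nat.cast_succ, natCast_smul_eq_sum hxbar, natCast_smul_eq_sum hxbar,
    Finset.sum_Icc_succ_top (by omega)]

lemma succ_smul_sub_eq_smul_sub_add
    (hxbar : ∀ t, xbar t = (t : ℝ)⁻¹ • ∑ s ∈ Finset.Icc 1 t, y s) (t : ℕ) (p : E) :
    ((t : ℝ) + 1) • (xbar (t + 1) - p) = (t : ℝ) • (xbar t - p) + (y (t + 1) - p) := by
  rw [smul_sub, succ_smul_eq_smul_add hxbar]
  module

end RunningAverage

lemma natCast_mul_le_of_succ_sq_mul_le {d : ℕ → ℝ} {C : ℝ} (hC : 0 ≤ C)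
    (hstep : ∀ t : ℕ, ((t : ℝ) + 1) ^ 2 * d (t + 1) ≤ (t : ℝ) ^ 2 * d t + C) (t : ℕ) :
    (t : ℝ) * d t ≤ C := by
  induction t with
  | zero => simpa using hC
  | succ t ih =>
    have ht : (0 : ℝ) ≤ t := t.cast_nonneg
    have : ((t : ℝ) + 1) * (((t : ℝ) + 1) * d (t + 1)) ≤ ((t : ℝ) + 1) * C := by
      nlinarith [hstep t, mul_le_mul_of_nonneg_left ih ht]
    push_cast
    exact le_of_mul_le_mul_left this (by positivity)

theorem stmt_2_general {E : Type*} [NormedAddCommGroup E] [InnerProductSpace ℝ E]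
    (M : ℝ)
    (T : Set E)
    (hTball : T ⊆ Metric.closedBall 0 M)
    (y : ℕ → E) (hy : ∀ t, 1 ≤ t → ‖y t‖ ≤ M)
    (xbar : ℕ → E) (hxbar : ∀ t, xbar t = (t : ℝ)⁻¹ • ∑ s ∈ Finset.Icc 1 t, y s)
    (proj : E → E) (hprojT : ∀ s, proj s ∈ T)
    (hproj : ∀ s, ∀ q ∈ T, ‖s - proj s‖ ≤ ‖s - q‖)
    (hBlackwell : ∀ t, 1 ≤ t → xbar t ∉ T →
      0 ≤ ⟪y (t + 1) - proj (xbar t),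
            ‖proj (xbar t) - xbar t‖⁻¹ • (proj (xbar t) - xbar t)⟫) :
    ∀ t, 1 ≤ t → Metric.infDist (xbar t) T ^ 2 ≤ 4 * M ^ 2 / t := by
  have hprojM (s : E) : ‖proj s‖ ≤ M := by simpa using hTball (hprojT s)
  have hcross (t : ℕ) :
      (t : ℝ) * ⟪xbar t - proj (xbar t), y (t + 1) - proj (xbar t)⟫ ≤ 0 := by
    rcases Nat.eq_zero_or_pos t with rfl | ht
    · simp
    · exact mul_nonpos_of_nonneg_of_nonpos t.cast_nonneg
        (inner_sub_proj_nonpos hproj (hBlackwell t ht))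
  have hstep (t : ℕ) : ((t : ℝ) + 1) ^ 2 * ‖xbar (t + 1) - proj (xbar (t + 1))‖ ^ 2 ≤
      (t : ℝ) ^ 2 * ‖xbar t - proj (xbar t)‖ ^ 2 + (M + M) ^ 2 := by
    calc _ ≤ ((t : ℝ) + 1) ^ 2 * ‖xbar (t + 1) - proj (xbar t)‖ ^ 2 := by
          gcongr
          exact hproj _ _ (hprojT _)
      _ = ‖(t : ℝ) • (xbar t - proj (xbar t)) + (y (t + 1) - proj (xbar t))‖ ^ 2 := by
          rw [← succ_smul_sub_eq_smul_sub_add hxbar, norm_smul, mul_pow,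
            Real.norm_of_nonneg (by positivity)]
      _ ≤ _ := norm_smul_add_sq_le (hcross t)
      _ ≤ _ := by
          gcongr
          exact norm_sub_le_of_le (hy _ (by omega)) (hprojM _)
  intro t ht
  calc Metric.infDist (xbar t) T ^ 2 ≤ ‖xbar t - proj (xbar t)‖ ^ 2 := by
        gcongr
        · exact Metric.infDist_nonneg
        · exact dist_eq_norm (xbar t) _ ▸ Metric.infDist_le_dist_of_mem (hprojT _)
    _ ≤ 4 * M ^ 2 / t := by
        rw [le_div_iff₀ (by exact_mod_cast ht), mul_comm]
        linarith [natCast_mul_le_of_succ_sq_mul_le (d := fun t ↦ ‖xbar t - proj (xbar t)‖ ^ 2)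
          (sq_nonneg (M + M)) hstep t]

/-- Blackwell approachability rate, D(x̄_t, T)² ≤ 4M²/t. -/
theorem stmt_2 {E : Type*} [NormedAddCommGroup E] [InnerProductSpace ℝ E] [CompleteSpace E]
    (M : ℝ) (hM : 0 < M)
    (T : Set E) (hTne : T.Nonempty) (hTclosed : IsClosed T) (hTconv : Convex ℝ T)
    (hTball : T ⊆ Metric.closedBall 0 M)
    (y : ℕ → E) (hy : ∀ t, 1 ≤ t → ‖y t‖ ≤ M)
    (xbar : ℕ → E) (hxbar : ∀ t, xbar t = (t : ℝ)⁻¹ • ∑ s ∈ Finset.Icc 1 t, y s)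
    (proj : E → E) (hprojT : ∀ s, proj s ∈ T)
    (hproj : ∀ s, ∀ q ∈ T, ‖s - proj s‖ ≤ ‖s - q‖)
    (hBlackwell : ∀ t, 1 ≤ t → xbar t ∉ T →
      0 ≤ ⟪y (t + 1) - proj (xbar t),
            ‖proj (xbar t) - xbar t‖⁻¹ • (proj (xbar t) - xbar t)⟫) :
    ∀ t, 1 ≤ t → Metric.infDist (xbar t) T ^ 2 ≤ 4 * M ^ 2 / t :=
  stmt_2_general M T hTball y hy xbar hxbar proj hprojT hproj hBlackwell
end

section
/- Let E be a real Hilbert space, M > 0, and T ⊆ E a nonempty closed convex set contained in the closed ball of radius M centered at 0. Let (y_t)_{t≥1} be a sequence in E with ‖y_t‖ ≤ M for all t, and let x̄_t = (1/t)·Σ_{s=1}^{t} y_s. If for every t ≥ 1 with x̄_t ∉ T one has ⟨y_{t+1} − Π_T(x̄_t), λ_{x̄_t}⟩ ≥ 0, then the averages approach T: lim_{t→∞} D(x̄_t, T) = 0. -/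
/-!
Write `D t` for the distance from the average `x̄ t` to `T` and `p = Π_T(x̄ t)`. Since
`(t + 1) (x̄ (t+1) - p) = t (x̄ t - p) + (y (t+1) - p)` and Blackwell's condition makes the
cross term `⟪x̄ t - p, y (t+1) - p⟫` nonpositive, Pythagoras gives
`((t + 1) D (t+1))² ≤ (t D t)² + (2M)²`. Hence `(t D t)² ≤ 4 M² t`, i.e. `D t ≤ 2M / √t`.
-/

open scoped RealInnerProductSpace
open Filter Metric

lemma le_mul_of_succ_le_add {a : ℕ → ℝ} {C : ℝ} (h0 : a 0 ≤ 0)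
    (hsucc : ∀ t, a (t + 1) ≤ a t + C) (t : ℕ) : a t ≤ C * t := by
  induction t with
  | zero => simpa using h0
  | succ t ih => push_cast; linarith [hsucc t]

lemma tendsto_zero_of_sq_mul_le {d : ℕ → ℝ} {C : ℝ} (hd : ∀ t, 0 ≤ d t)
    (h : ∀ t : ℕ, ((t : ℝ) * d t) ^ 2 ≤ C * t) : Tendsto d atTop (nhds 0) := by
  have hsqrt : Tendsto (fun t : ℕ => √(C / t)) atTop (nhds 0) := by
    simpa using (tendsto_const_div_atTop_nhds_zero_nat C).sqrt
  refine squeeze_zero' (Eventually.of_forall hd) ?_ hsqrt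
  filter_upwards [eventually_gt_atTop 0] with t ht
  have htpos : (0 : ℝ) < t := by exact_mod_cast ht
  have hsq : d t ^ 2 ≤ C / t := by
    rw [le_div_iff₀ htpos]
    nlinarith [h t]
  simpa [Real.sqrt_sq (hd t)] using Real.sqrt_le_sqrt hsq

lemma average_succ {E : Type*} [AddCommGroup E] [Module ℝ E] (y : ℕ → E) (t : ℕ) :
    ((t + 1 : ℕ) : ℝ)⁻¹ • ∑ s ∈ Finset.Icc 1 (t + 1), y s
      = ((t : ℝ) + 1)⁻¹ • ((t : ℝ) • ((t : ℝ)⁻¹ • ∑ s ∈ Finset.Icc 1 t, y s) + y (t + 1)) := by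
  rcases t.eq_zero_or_pos with rfl | ht
  · simp
  · rw [smul_inv_smul₀ (by positivity), Finset.sum_Icc_succ_top (by omega)]
    push_cast
    rfl

lemma infDist_eq_norm_sub_of_forall_le {E : Type*} [SeminormedAddCommGroup E] {T : Set E}
    {x p : E} (hp : p ∈ T) (hmin : ∀ q ∈ T, ‖x - p‖ ≤ ‖x - q‖) : infDist x T = ‖x - p‖ := by
  refine le_antisymm ?_ ((le_infDist ⟨p, hp⟩).2 fun q hq => ?_)
  · simpa [dist_eq_norm] using infDist_le_dist_of_mem (x := x) hp
  · simpa [dist_eq_norm] using hmin q hq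

section InnerProductSpace

variable {E : Type*} [NormedAddCommGroup E] [InnerProductSpace ℝ E]

lemma inner_nonneg_of_inner_normalize_nonneg {v w : E} (h : 0 ≤ ⟪v, ‖w‖⁻¹ • w⟫) :
    0 ≤ ⟪v, w⟫ := by
  rcases eq_or_ne w 0 with rfl | hw
  · simp
  · rw [real_inner_smul_right] at h
    exact (mul_nonneg_iff_of_pos_left (inv_pos.2 (norm_pos_iff.2 hw))).1 h

lemma norm_add_sq_le_of_inner_nonpos {u v : E} (h : ⟪u, v⟫ ≤ 0) :
    ‖u + v‖ ^ 2 ≤ ‖u‖ ^ 2 + ‖v‖ ^ 2 := by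
  rw [norm_add_sq_real]
  linarith

/-- The cross term carries the weight `t` so that the recursion can start at `t = 0`, where
Blackwell's condition is not assumed. -/
lemma sq_mul_infDist_average_le {T : Set E} {x y p : E} {t : ℝ} (ht : 0 ≤ t) (hp : p ∈ T)
    (hx : infDist x T = ‖x - p‖) (hcross : t * ⟪x - p, y - p⟫ ≤ 0) :
    ((t + 1) * infDist ((t + 1)⁻¹ • (t • x + y)) T) ^ 2
      ≤ (t * infDist x T) ^ 2 + ‖y - p‖ ^ 2 := by
  set z := (t + 1)⁻¹ • (t • x + y)
  have hz : (t + 1) • (z - p) = t • (x - p) + (y - p) := by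
    rw [smul_sub, smul_inv_smul₀ (by positivity)]
    module
  have hzT : infDist z T ≤ ‖z - p‖ := by
    simpa [dist_eq_norm] using infDist_le_dist_of_mem (x := z) hp
  calc ((t + 1) * infDist z T) ^ 2 ≤ ((t + 1) * ‖z - p‖) ^ 2 := by
        have := infDist_nonneg (x := z) (s := T)
        gcongr
    _ = ‖t • (x - p) + (y - p)‖ ^ 2 := by
      rw [← hz, norm_smul, Real.norm_of_nonneg (by positivity)]
    _ ≤ ‖t • (x - p)‖ ^ 2 + ‖y - p‖ ^ 2 :=
      norm_add_sq_le_of_inner_nonpos (by rwa [real_inner_smul_left])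
    _ = (t * infDist x T) ^ 2 + ‖y - p‖ ^ 2 := by
      rw [norm_smul, Real.norm_of_nonneg ht, hx]

end InnerProductSpace

theorem stmt_3_general {E : Type*} [NormedAddCommGroup E] [InnerProductSpace ℝ E]
    (M : ℝ)
    (T : Set E)
    (hTball : T ⊆ Metric.closedBall 0 M)
    (y : ℕ → E) (hy : ∀ t, 1 ≤ t → ‖y t‖ ≤ M)
    (xbar : ℕ → E) (hxbar : ∀ t, xbar t = (t : ℝ)⁻¹ • ∑ s ∈ Finset.Icc 1 t, y s)
    (proj : E → E) (hprojT : ∀ s, proj s ∈ T)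
    (hproj : ∀ s, ∀ q ∈ T, ‖s - proj s‖ ≤ ‖s - q‖)
    (hBlackwell : ∀ t, 1 ≤ t → xbar t ∉ T →
      0 ≤ ⟪y (t + 1) - proj (xbar t),
            ‖proj (xbar t) - xbar t‖⁻¹ • (proj (xbar t) - xbar t)⟫) :
    Filter.Tendsto (fun t => Metric.infDist (xbar t) T) Filter.atTop (nhds 0) := by
  have hxbar_succ (t : ℕ) : xbar (t + 1) = ((t : ℝ) + 1)⁻¹ • ((t : ℝ) • xbar t + y (t + 1)) := by
    rw [hxbar, hxbar, average_succ]
  have hcross (t : ℕ) : (t : ℝ) * ⟪xbar t - proj (xbar t), y (t + 1) - proj (xbar t)⟫ ≤ 0 := by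
    rcases t.eq_zero_or_pos with rfl | ht
    · simp
    refine mul_nonpos_of_nonneg_of_nonpos t.cast_nonneg ?_
    by_cases hxT : xbar t ∈ T
    · have hmin := hproj (xbar t) (xbar t) hxT
      rw [sub_self, norm_zero, norm_le_zero_iff] at hmin
      simp [hmin]
    · rw [← neg_sub (proj (xbar t)), inner_neg_left, neg_nonpos, real_inner_comm]
      exact inner_nonneg_of_inner_normalize_nonneg (hBlackwell t ht hxT)
  have hgap (t : ℕ) : ‖y (t + 1) - proj (xbar t)‖ ^ 2 ≤ (2 * M) ^ 2 := by
    have hp : ‖proj (xbar t)‖ ≤ M := mem_closedBall_zero_iff.1 (hTball (hprojT _))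
    have hyt := hy (t + 1) (by omega)
    gcongr
    linarith [norm_sub_le (y (t + 1)) (proj (xbar t))]
  have hstep (t : ℕ) : (((t + 1 : ℕ) : ℝ) * infDist (xbar (t + 1)) T) ^ 2
      ≤ ((t : ℝ) * infDist (xbar t) T) ^ 2 + (2 * M) ^ 2 := by
    push_cast
    rw [hxbar_succ]
    exact (sq_mul_infDist_average_le t.cast_nonneg (hprojT _)
      (infDist_eq_norm_sub_of_forall_le (hprojT _) (hproj _)) (hcross t)).trans
      (by linarith [hgap t])
  exact tendsto_zero_of_sq_mul_le (fun t => infDist_nonneg)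
    (le_mul_of_succ_le_add (a := fun t : ℕ => ((t : ℝ) * infDist (xbar t) T) ^ 2) (by simp) hstep)

/-- Blackwell approachability, the averages approach the target set. -/
theorem stmt_3 {E : Type*} [NormedAddCommGroup E] [InnerProductSpace ℝ E] [CompleteSpace E]
    (M : ℝ) (hM : 0 < M)
    (T : Set E) (hTne : T.Nonempty) (hTclosed : IsClosed T) (hTconv : Convex ℝ T)
    (hTball : T ⊆ Metric.closedBall 0 M)
    (y : ℕ → E) (hy : ∀ t, 1 ≤ t → ‖y t‖ ≤ M)
    (xbar : ℕ → E) (hxbar : ∀ t, xbar t = (t : ℝ)⁻¹ • ∑ s ∈ Finset.Icc 1 t, y s)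
    (proj : E → E) (hprojT : ∀ s, proj s ∈ T)
    (hproj : ∀ s, ∀ q ∈ T, ‖s - proj s‖ ≤ ‖s - q‖)
    (hBlackwell : ∀ t, 1 ≤ t → xbar t ∉ T →
      0 ≤ ⟪y (t + 1) - proj (xbar t),
            ‖proj (xbar t) - xbar t‖⁻¹ • (proj (xbar t) - xbar t)⟫) :
    Filter.Tendsto (fun t => Metric.infDist (xbar t) T) Filter.atTop (nhds 0) :=
  stmt_3_general M T hTball y hy xbar hxbar proj hprojT hproj hBlackwell
end

section
/- Every row-stochastic matrix P on a nonempty finite type X admits a stationary distribution: there exists d : X → ℝ with d(x) ≥ 0 for all x, Σ_x d(x) = 1, and Σ_x d(x)·P(x,y) = d(y) for all y. -/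
/-!
Since `P *ᵥ 1 = 1`, the matrix `P - 1` is singular, so `P` also has a nonzero left fixed vector
`v`. Nonnegativity of `P` gives `|v| ≤ |v| ᵥ* P` entrywise, and both sides have the same total
mass because `P` is row-stochastic; hence `|v|` is a left fixed vector too, and normalizing it
gives a stationary distribution.
-/

open Finset

namespace Matrix

variable {n R : Type*} [Fintype n]

theorem exists_ne_zero_vecMul_eq_self_of_mulVec_one [DecidableEq n] [Nonempty n] [CommRing R]
    [IsDomain R] {M : Matrix n n R} (hM : M *ᵥ 1 = 1) : ∃ v ≠ 0, v ᵥ* M = v := by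
  have hdet : (M - 1).det = 0 := exists_mulVec_eq_zero_iff.mp
    ⟨1, one_ne_zero, by rw [sub_mulVec, hM, one_mulVec, sub_self]⟩
  obtain ⟨v, hv, hvM⟩ := exists_vecMul_eq_zero_iff.mpr hdet
  exact ⟨v, hv, by rwa [vecMul_sub, vecMul_one, sub_eq_zero] at hvM⟩

theorem sum_vecMul_of_mulVec_one [Semiring R] {M : Matrix n n R} (hM : M *ᵥ 1 = 1)
    (x : n → R) : ∑ j, (x ᵥ* M) j = ∑ i, x i := by
  rw [← dotProduct_one, ← dotProduct_one, ← dotProduct_mulVec, hM]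

section LinearOrderedRing

variable [Ring R] [LinearOrder R] [IsStrictOrderedRing R] {M : Matrix n n R}

theorem abs_vecMul_le (hM : ∀ i j, 0 ≤ M i j) (v : n → R) : |v ᵥ* M| ≤ |v| ᵥ* M := fun j =>
  calc |∑ i, v i * M i j| ≤ ∑ i, |v i * M i j| := abs_sum_le_sum_abs _ _
    _ = ∑ i, |v i| * M i j := by simp only [abs_mul, abs_of_nonneg (hM _ j)]

theorem abs_vecMul_eq_abs_of_vecMul_eq_self [DecidableEq n] (hM : M ∈ rowStochastic R n)
    {v : n → R} (hv : v ᵥ* M = v) : |v| ᵥ* M = |v| := by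
  have hle : |v| ≤ |v| ᵥ* M := by simpa only [hv] using abs_vecMul_le hM.1 v
  have hsum : ∑ j, |v| j = ∑ j, (|v| ᵥ* M) j := (sum_vecMul_of_mulVec_one hM.2 _).symm
  funext j
  exact ((sum_eq_sum_iff_of_le fun j _ => hle j).mp hsum j (mem_univ j)).symm

end LinearOrderedRing

theorem exists_stationary_of_mem_rowStochastic [DecidableEq n] [Nonempty n] [Field R]
    [LinearOrder R] [IsStrictOrderedRing R] {M : Matrix n n R} (hM : M ∈ rowStochastic R n) :
    ∃ d : n → R, 0 ≤ d ∧ ∑ i, d i = 1 ∧ d ᵥ* M = d := by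
  obtain ⟨v, hv0, hv⟩ := exists_ne_zero_vecMul_eq_self_of_mulVec_one hM.2
  obtain ⟨i, hi⟩ := Function.ne_iff.mp hv0
  have hmass : 0 < ∑ i, |v| i :=
    sum_pos' (fun j _ => abs_nonneg (v j)) ⟨i, mem_univ i, abs_pos.mpr hi⟩
  refine ⟨(∑ i, |v| i)⁻¹ • |v|, smul_nonneg (inv_nonneg.mpr hmass.le) (abs_nonneg v), ?_, ?_⟩
  · simp only [Pi.smul_apply, smul_eq_mul, ← mul_sum, inv_mul_cancel₀ hmass.ne']
  · rw [smul_vecMul, abs_vecMul_eq_abs_of_vecMul_eq_self hM hv]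

end Matrix

/-- every row-stochastic matrix on a nonempty finite type admits a
stationary distribution. -/
theorem stmt_4 {X : Type*} [Fintype X] [Nonempty X] (P : Matrix X X ℝ)
    (hPnonneg : ∀ x y, 0 ≤ P x y) (hProw : ∀ x, ∑ y, P x y = 1) :
    ∃ d : X → ℝ, (∀ x, 0 ≤ d x) ∧ (∑ x, d x = 1) ∧ (∀ y, ∑ x, d x * P x y = d y) := by
  classical
  obtain ⟨d, hd_nonneg, hd_mass, hd_fixed⟩ := Matrix.exists_stationary_of_mem_rowStochastic
    (Matrix.mem_rowStochastic_iff_sum.mpr ⟨hPnonneg, hProw⟩)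
  exact ⟨d, hd_nonneg, hd_mass, congr_fun hd_fixed⟩
end

section
/- Let P be an irreducible row-stochastic matrix on a nonempty finite type X. Then P has exactly one stationary distribution d, and this d is strictly positive: d(x) > 0 for every x ∈ X. -/
/-!
A fixed row vector `v ᵥ* P = v` of a row-stochastic `P` satisfies `|v| ≤ |v| ᵥ* P` entrywise by
the triangle inequality, and both sides have the same total mass, so `|v|` is fixed as well.
A nonnegative nonzero fixed vector is fixed by every power of `P`, so irreducibility spreads
its positive entry to all entries. A left null vector of `P - 1` (which kills the column of ones)
thus normalises to a positive stationary distribution. If `v` is fixed with total mass `0` and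
has a positive entry, then `|v| + v` is a nonnegative nonzero fixed vector, hence positive, so
every entry of `v` is positive, which contradicts the mass being `0`; this gives uniqueness.
-/

/-- A stationary distribution of a matrix `P`. -/
def IsStationaryDist {X : Type*} [Fintype X] (P : Matrix X X ℝ) (d : X → ℝ) : Prop :=
  (∀ x, 0 ≤ d x) ∧ (∑ x, d x = 1) ∧ (∀ y, ∑ x, d x * P x y = d y)

open Finset

namespace Matrix

theorem vecMul_pow_eq_self {R X : Type*} [Semiring R] [Fintype X] [DecidableEq X]
    {P : Matrix X X R} {v : X → R} (hv : v ᵥ* P = v) (n : ℕ) : v ᵥ* P ^ n = v := by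
  induction n with
  | zero => rw [pow_zero, vecMul_one]
  | succ n ih => rw [pow_succ, ← vecMul_vecMul, ih, hv]

section LinearOrderedCommRing

variable {R X : Type*} [CommRing R] [LinearOrder R] [IsStrictOrderedRing R] [Fintype X]
  [DecidableEq X] {P : Matrix X X R} {v : X → R}

theorem sum_vecMul_of_mem_rowStochastic (hP : P ∈ rowStochastic R X) (v : X → R) :
    ∑ y, (v ᵥ* P) y = ∑ x, v x := by
  rw [← dotProduct_one, ← dotProduct_mulVec, hP.2, dotProduct_one]

theorem abs_vecMul_eq_self_of_mem_rowStochastic (hP : P ∈ rowStochastic R X)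
    (hv : v ᵥ* P = v) : |v| ᵥ* P = |v| := by
  have hle : ∀ y, |v y| ≤ (|v| ᵥ* P) y := fun y =>
    calc |v y| = |∑ x, v x * P x y| := by rw [← congrFun hv y]; rfl
      _ ≤ ∑ x, |v x * P x y| := abs_sum_le_sum_abs _ _
      _ = (|v| ᵥ* P) y := by
        simp only [abs_mul, abs_of_nonneg (hP.1 _ _)]; rfl
  have hsum : ∑ y, |v y| = ∑ y, (|v| ᵥ* P) y := by
    rw [sum_vecMul_of_mem_rowStochastic hP]; rfl
  funext y
  exact ((sum_eq_sum_iff_of_le fun y _ => hle y).mp hsum y (mem_univ y)).symm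

theorem IsIrreducible.pos_of_vecMul_eq_self (hirr : P.IsIrreducible) (hv : v ᵥ* P = v)
    (hpos : 0 < v) (y : X) : 0 < v y := by
  obtain ⟨hv0, x, hx⟩ := Pi.lt_def.mp hpos
  obtain ⟨n, -, hn⟩ := (isIrreducible_iff_exists_pow_pos hirr.nonneg).mp hirr x y
  calc 0 < v x * (P ^ n) x y := mul_pos hx hn
    _ ≤ ∑ x', v x' * (P ^ n) x' y :=
      single_le_sum (f := fun x' => v x' * (P ^ n) x' y)
        (fun x' _ => mul_nonneg (hv0 x') (pow_apply_nonneg hirr.nonneg n x' y)) (mem_univ x)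
    _ = v y := congrFun (vecMul_pow_eq_self hv n) y

theorem IsIrreducible.eq_zero_of_vecMul_eq_self (hirr : P.IsIrreducible)
    (hP : P ∈ rowStochastic R X) (hv : v ᵥ* P = v) (hsum : ∑ x, v x = 0) : v = 0 := by
  by_contra hne
  obtain ⟨x, hx⟩ : ∃ x, 0 < v x := by
    by_contra! hnonpos
    exact hne (funext fun x => (sum_eq_zero_iff_of_nonpos fun x _ => hnonpos x).mp hsum x
      (mem_univ x))
  have hfix : (|v| + v) ᵥ* P = |v| + v := by
    rw [add_vecMul, abs_vecMul_eq_self_of_mem_rowStochastic hP hv, hv]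
  have hpos : 0 < |v| + v :=
    Pi.lt_def.mpr ⟨fun y => by
      simp only [Pi.zero_apply, Pi.add_apply, Pi.abs_apply]; linarith [neg_abs_le (v y)],
      x, by simp only [Pi.zero_apply, Pi.add_apply, Pi.abs_apply]; positivity⟩
  have hvpos : ∀ y, 0 < v y := fun y => by
    have := hirr.pos_of_vecMul_eq_self hfix hpos y
    rw [Pi.add_apply, Pi.abs_apply] at this
    cases abs_cases (v y) <;> linarith
  exact (sum_pos (fun y _ => hvpos y) ⟨x, mem_univ x⟩).ne' hsum

theorem exists_ne_zero_vecMul_eq_self_of_mem_rowStochastic [Nonempty X]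
    (hP : P ∈ rowStochastic R X) : ∃ v ≠ 0, v ᵥ* P = v := by
  have hdet : (P - 1).det = 0 := exists_mulVec_eq_zero_iff.mp
    ⟨1, one_ne_zero, by rw [sub_mulVec, hP.2, one_mulVec, sub_self]⟩
  obtain ⟨v, hv, hv0⟩ := exists_vecMul_eq_zero_iff.mpr hdet
  exact ⟨v, hv, by rwa [vecMul_sub, vecMul_one, sub_eq_zero] at hv0⟩

end LinearOrderedCommRing

end Matrix

section StationaryDist

open Matrix

variable {X : Type*} [Fintype X] {P : Matrix X X ℝ} {d : X → ℝ}

theorem isStationaryDist_iff :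
    IsStationaryDist P d ↔ 0 ≤ d ∧ ∑ x, d x = 1 ∧ d ᵥ* P = d := by
  simp only [IsStationaryDist, funext_iff]
  rfl

variable [DecidableEq X]

theorem exists_isStationaryDist [Nonempty X] (hP : P ∈ rowStochastic ℝ X) :
    ∃ d, IsStationaryDist P d := by
  obtain ⟨w, hw, hwP⟩ := exists_ne_zero_vecMul_eq_self_of_mem_rowStochastic hP
  have hmass : 0 < ∑ x, |w x| := by
    obtain ⟨x, hx⟩ := Function.ne_iff.mp hw
    exact sum_pos' (fun x _ => abs_nonneg (w x)) ⟨x, mem_univ x, abs_pos.mpr hx⟩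
  refine ⟨(∑ x, |w x|)⁻¹ • |w|, isStationaryDist_iff.mpr ⟨?_, ?_, ?_⟩⟩
  · exact smul_nonneg (inv_nonneg.mpr hmass.le) (abs_nonneg w)
  · simp only [Pi.smul_apply, Pi.abs_apply, smul_eq_mul, ← mul_sum, inv_mul_cancel₀ hmass.ne']
  · rw [smul_vecMul, abs_vecMul_eq_self_of_mem_rowStochastic hP hwP]

theorem IsStationaryDist.pos_of_isIrreducible (hirr : P.IsIrreducible)
    (hd : IsStationaryDist P d) (x : X) : 0 < d x := by
  obtain ⟨hd0, hsum, hfix⟩ := isStationaryDist_iff.mp hd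
  refine hirr.pos_of_vecMul_eq_self hfix (lt_of_le_of_ne hd0 fun h => ?_) x
  simp [← h] at hsum

theorem IsStationaryDist.eq_of_isIrreducible (hirr : P.IsIrreducible)
    (hP : P ∈ rowStochastic ℝ X) {d' : X → ℝ} (hd : IsStationaryDist P d)
    (hd' : IsStationaryDist P d') : d' = d := by
  obtain ⟨-, hsum, hfix⟩ := isStationaryDist_iff.mp hd
  obtain ⟨-, hsum', hfix'⟩ := isStationaryDist_iff.mp hd'
  refine sub_eq_zero.mp (hirr.eq_zero_of_vecMul_eq_self hP ?_ ?_)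
  · rw [sub_vecMul, hfix, hfix']
  · simp only [Pi.sub_apply, sum_sub_distrib, hsum, hsum', sub_self]

end StationaryDist

/-- an irreducible row-stochastic matrix has exactly one stationary
distribution, and it is strictly positive. -/
theorem stmt_5 {X : Type*} [Fintype X] [DecidableEq X] [Nonempty X] (P : Matrix X X ℝ)
    (hPnonneg : ∀ x y, 0 ≤ P x y) (hProw : ∀ x, ∑ y, P x y = 1)
    (hirr : ∀ x y, ∃ n, 1 ≤ n ∧ 0 < (P ^ n) x y) :
    ∃ d : X → ℝ, IsStationaryDist P d ∧ (∀ x, 0 < d x) ∧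
      ∀ d' : X → ℝ, IsStationaryDist P d' → d' = d := by
  have hP : P ∈ Matrix.rowStochastic ℝ X :=
    Matrix.mem_rowStochastic_iff_sum.mpr ⟨hPnonneg, hProw⟩
  have hirr' : P.IsIrreducible := (Matrix.isIrreducible_iff_exists_pow_pos hPnonneg).mpr hirr
  obtain ⟨d, hd⟩ := exists_isStationaryDist hP
  exact ⟨d, hd, hd.pos_of_isIrreducible hirr', fun _ hd' => hd.eq_of_isIrreducible hirr' hP hd'⟩
end

section
/- Let P be a primitive row-stochastic matrix on a nonempty finite type X, i.e., there exists N ≥ 1 such that (P^N)(x,y) > 0 for all x,y. Let d be its stationary distribution and μ : X → ℝ any probability vector. Then the distribution at time n converges to d: for every y ∈ X, (μ·Pⁿ)(y) → d(y) as n → ∞, where (μ·Pⁿ)(y) = Σ_x μ(x)·(Pⁿ)(x,y). -/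
/-!
The column `f = P ^ n *ᵥ 𝟙_y` is averaged by every further step, so its spread `sup f - inf f`
never grows, and one step of `Q = P ^ N`, whose entries are all at least some `δ > 0`, pulls the
maximum down by `δ` times the spread. Hence the spread decays like `(1 - δ) ^ (n / N)`. Both
`μ ⬝ᵥ f` and `d ⬝ᵥ f = d y` (stationarity) are averages of `f`, so they differ by at most its
spread.
-/

open Finset Matrix Filter Topology

namespace Matrix

variable {X : Type*} [Fintype X]

noncomputable def spread (f : X → ℝ) : ℝ := (⨆ x, f x) - ⨅ x, f x

variable {w : X → ℝ}

lemma iInf_le_dotProduct (hw : w ∈ stdSimplex ℝ X) (f : X → ℝ) : ⨅ x, f x ≤ w ⬝ᵥ f :=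
  calc ⨅ x, f x = ∑ x, w x * ⨅ x, f x := by rw [← sum_mul, hw.2, one_mul]
    _ ≤ w ⬝ᵥ f := sum_le_sum fun x _ =>
      mul_le_mul_of_nonneg_left (ciInf_le (Finite.bddBelow_range f) x) (hw.1 x)

lemma dotProduct_le_iSup (hw : w ∈ stdSimplex ℝ X) (f : X → ℝ) : w ⬝ᵥ f ≤ ⨆ x, f x :=
  calc w ⬝ᵥ f ≤ ∑ x, w x * ⨆ x, f x := sum_le_sum fun x _ =>
      mul_le_mul_of_nonneg_left (le_ciSup (Finite.bddAbove_range f) x) (hw.1 x)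
    _ = ⨆ x, f x := by rw [← sum_mul, hw.2, one_mul]

lemma abs_dotProduct_sub_dotProduct_le_spread {v : X → ℝ} (hv : v ∈ stdSimplex ℝ X)
    (hw : w ∈ stdSimplex ℝ X) (f : X → ℝ) : |v ⬝ᵥ f - w ⬝ᵥ f| ≤ spread f := by
  have := iInf_le_dotProduct hv f
  have := iInf_le_dotProduct hw f
  have := dotProduct_le_iSup hv f
  have := dotProduct_le_iSup hw f
  rw [abs_sub_le_iff, spread]
  constructor <;> linarith

section

variable [DecidableEq X] {P : Matrix X X ℝ}

lemma row_mem_stdSimplex (hP : P ∈ rowStochastic ℝ X) (x : X) : P x ∈ stdSimplex ℝ X :=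
  ⟨fun _ => nonneg_of_mem_rowStochastic hP, sum_row_of_mem_rowStochastic hP x⟩

lemma vecMul_pow_eq_self_s7 {d : X → ℝ} (hd : d ᵥ* P = d) (n : ℕ) : d ᵥ* P ^ n = d := by
  induction n with
  | zero => simp
  | succ n ih => rw [pow_succ, ← vecMul_vecMul, ih, hd]

end

variable [Nonempty X]

lemma spread_nonneg (f : X → ℝ) : 0 ≤ spread f := by
  obtain ⟨x⟩ := ‹Nonempty X›
  exact sub_nonneg.2 <|
    (ciInf_le (Finite.bddBelow_range f) x).trans (le_ciSup (Finite.bddAbove_range f) x)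

lemma dotProduct_le_iSup_sub_mul_spread (hw : w ∈ stdSimplex ℝ X) {δ : ℝ} (hδ : ∀ x, δ ≤ w x)
    (f : X → ℝ) : w ⬝ᵥ f ≤ (⨆ x, f x) - δ * spread f := by
  set M := ⨆ x, f x
  obtain ⟨z, hz⟩ := exists_eq_ciInf_of_finite (f := f)
  have hgap : ∀ x, 0 ≤ w x * (M - f x) := fun x =>
    mul_nonneg (hw.1 x) (sub_nonneg.2 (le_ciSup (Finite.bddAbove_range f) x))
  -- The gap `M - w ⬝ᵥ f` is a sum of nonnegative terms, one of which is `w z * spread f`.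
  have : δ * spread f ≤ M - w ⬝ᵥ f :=
    calc δ * spread f ≤ w z * (M - f z) := by
          rw [hz]; exact mul_le_mul_of_nonneg_right (hδ z) (spread_nonneg f)
      _ ≤ ∑ x, w x * (M - f x) := single_le_sum (fun x _ => hgap x) (mem_univ z)
      _ = M - w ⬝ᵥ f := by simp only [mul_sub, sum_sub_distrib, ← sum_mul, hw.2, one_mul]; rfl
  linarith

lemma exists_pos_le_of_forall_pos {A : Matrix X X ℝ} (hA : ∀ x y, 0 < A x y) :
    ∃ δ > 0, ∀ x y, δ ≤ A x y := by
  obtain ⟨p, hp⟩ := Finite.exists_min fun p : X × X => A p.1 p.2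
  exact ⟨A p.1 p.2, hA _ _, fun x y => hp (x, y)⟩

variable [DecidableEq X] {P : Matrix X X ℝ}

lemma spread_mulVec_le_mul (hP : P ∈ rowStochastic ℝ X) {δ : ℝ} (hδ : ∀ x y, δ ≤ P x y)
    (f : X → ℝ) : spread (P *ᵥ f) ≤ (1 - δ) * spread f := by
  have hsup : ⨆ x, (P *ᵥ f) x ≤ (⨆ x, f x) - δ * spread f :=
    ciSup_le fun x => dotProduct_le_iSup_sub_mul_spread (row_mem_stdSimplex hP x) (hδ x) f
  have hinf : ⨅ x, f x ≤ ⨅ x, (P *ᵥ f) x :=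
    le_ciInf fun x => iInf_le_dotProduct (row_mem_stdSimplex hP x) f
  unfold spread at hsup ⊢
  linarith

lemma spread_mulVec_le (hP : P ∈ rowStochastic ℝ X) (f : X → ℝ) : spread (P *ᵥ f) ≤ spread f := by
  simpa using spread_mulVec_le_mul hP (fun x y => nonneg_of_mem_rowStochastic hP) f

lemma spread_pow_mulVec_le_pow_mul (hP : P ∈ rowStochastic ℝ X) {δ : ℝ} (hδ : ∀ x y, δ ≤ P x y)
    (f : X → ℝ) (k : ℕ) : spread (P ^ k *ᵥ f) ≤ (1 - δ) ^ k * spread f := by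
  have hδ1 : 0 ≤ 1 - δ := by
    obtain ⟨x⟩ := ‹Nonempty X›
    linarith [hδ x x, le_one_of_mem_rowStochastic hP (i := x) (j := x)]
  induction k with
  | zero => simp
  | succ k ih =>
    calc spread (P ^ (k + 1) *ᵥ f) ≤ (1 - δ) * spread (P ^ k *ᵥ f) := by
          rw [pow_succ', ← mulVec_mulVec]; exact spread_mulVec_le_mul hP hδ _
      _ ≤ (1 - δ) ^ (k + 1) * spread f := by
          rw [pow_succ']; exact mul_assoc (1 - δ) _ _ ▸ mul_le_mul_of_nonneg_left ih hδ1

lemma tendsto_spread_pow_mulVec (hP : P ∈ rowStochastic ℝ X)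
    (hprim : ∃ N, 1 ≤ N ∧ ∀ x y, 0 < (P ^ N) x y) (f : X → ℝ) :
    Tendsto (fun n => spread (P ^ n *ᵥ f)) atTop (𝓝 0) := by
  obtain ⟨N, hN, hpos⟩ := hprim
  obtain ⟨δ, hδ, hδle⟩ := exists_pos_le_of_forall_pos hpos
  have hPN : P ^ N ∈ rowStochastic ℝ X := pow_mem hP N
  have hδ1 : δ ≤ 1 := by
    obtain ⟨x⟩ := ‹Nonempty X›
    exact (hδle x x).trans (le_one_of_mem_rowStochastic hPN)
  -- Write `n = N * (n / N) + n % N`: the `n % N` extra steps do not increase the spread.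
  have hbound : ∀ n, spread (P ^ n *ᵥ f) ≤ (1 - δ) ^ (n / N) * spread f := fun n =>
    calc spread (P ^ n *ᵥ f) = spread ((P ^ N) ^ (n / N) *ᵥ (P ^ (n % N) *ᵥ f)) := by
          rw [mulVec_mulVec, ← pow_mul, ← pow_add, Nat.div_add_mod]
      _ ≤ (1 - δ) ^ (n / N) * spread (P ^ (n % N) *ᵥ f) :=
          spread_pow_mulVec_le_pow_mul hPN hδle _ _
      _ ≤ (1 - δ) ^ (n / N) * spread f :=
          mul_le_mul_of_nonneg_left (spread_mulVec_le (pow_mem hP _) f)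
            (pow_nonneg (by linarith) _)
  have hgeom : Tendsto (fun n => (1 - δ) ^ (n / N) * spread f) atTop (𝓝 0) := by
    simpa using ((tendsto_pow_atTop_nhds_zero_of_lt_one (by linarith) (by linarith)).comp
      (Nat.tendsto_div_const_atTop (by omega))).mul_const (spread f)
  exact squeeze_zero (fun n => spread_nonneg _) hbound hgeom

theorem tendsto_dotProduct_pow_mulVec (hP : P ∈ rowStochastic ℝ X)
    (hprim : ∃ N, 1 ≤ N ∧ ∀ x y, 0 < (P ^ N) x y) {μ d : X → ℝ} (hμ : μ ∈ stdSimplex ℝ X)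
    (hd : d ∈ stdSimplex ℝ X) (hdP : d ᵥ* P = d) (f : X → ℝ) :
    Tendsto (fun n => μ ⬝ᵥ (P ^ n *ᵥ f)) atTop (𝓝 (d ⬝ᵥ f)) := by
  have hd_eq : ∀ n, d ⬝ᵥ f = d ⬝ᵥ (P ^ n *ᵥ f) := fun n => by
    rw [dotProduct_mulVec, vecMul_pow_eq_self_s7 hdP]
  rw [tendsto_iff_norm_sub_tendsto_zero]
  refine squeeze_zero (fun n => norm_nonneg _) (fun n => ?_) (tendsto_spread_pow_mulVec hP hprim f)
  rw [Real.norm_eq_abs, hd_eq n]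
  exact abs_dotProduct_sub_dotProduct_le_spread hμ hd _

end Matrix

/-- for a primitive row-stochastic matrix, the time-n distribution converges
to the stationary distribution. -/
theorem stmt_7 {X : Type*} [Fintype X] [DecidableEq X] [Nonempty X] (P : Matrix X X ℝ)
    (hPnonneg : ∀ x y, 0 ≤ P x y) (hProw : ∀ x, ∑ y, P x y = 1)
    (hprim : ∃ N, 1 ≤ N ∧ ∀ x y, 0 < (P ^ N) x y)
    (d : X → ℝ) (hd0 : ∀ x, 0 ≤ d x) (hd1 : ∑ x, d x = 1)
    (hdstat : ∀ y, ∑ x, d x * P x y = d y)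
    (μ : X → ℝ) (hμ0 : ∀ x, 0 ≤ μ x) (hμ1 : ∑ x, μ x = 1) :
    ∀ y, Filter.Tendsto (fun n : ℕ => ∑ x, μ x * (P ^ n) x y)
      Filter.atTop (nhds (d y)) := by
  intro y
  have hP : P ∈ rowStochastic ℝ X := mem_rowStochastic_iff_sum.2 ⟨hPnonneg, hProw⟩
  have hdP : d ᵥ* P = d := funext hdstat
  have h := tendsto_dotProduct_pow_mulVec hP hprim ⟨hμ0, hμ1⟩ ⟨hd0, hd1⟩ hdP (Pi.single y 1)
  rw [dotProduct_single_one] at h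
  simpa [mulVec_single_one, dotProduct] using h
end

section
/- Let P be an irreducible row-stochastic matrix on a nonempty finite type X. If v : X → ℝ satisfies Σ_y P(x,y)·v(y) = v(x) for all x ∈ X, then v is constant: v(x) = v(y) for all x, y ∈ X. -/
/-!
Maximum principle: at a point `x₀` where `v` attains its maximum, `v x₀` is a weighted average
of the values of `v` with weights the row `x₀` of `Pⁿ`, so `v` equals `v x₀` wherever that row is
positive. By irreducibility every point is reached by some power of `P`.
-/

namespace Matrix

variable {n R : Type*} [Fintype n] [DecidableEq n]

theorem pow_mulVec_eq_self [Semiring R] {M : Matrix n n R} {v : n → R} (hv : M *ᵥ v = v)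
    (k : ℕ) : (M ^ k) *ᵥ v = v := by
  induction k with
  | zero => exact one_mulVec v
  | succ k ih => rw [pow_succ, ← mulVec_mulVec, hv, ih]

theorem apply_eq_of_mulVec_eq_self_of_forall_le [Ring R] [LinearOrder R] [IsStrictOrderedRing R]
    {M : Matrix n n R} (hM : M ∈ rowStochastic R n) {v : n → R} (hv : M *ᵥ v = v) {i j : n}
    (hmax : ∀ k, v k ≤ v i) (hij : 0 < M i j) : v j = v i := by
  have hgap : ∑ k, M i k * (v i - v k) = 0 := by
    have hvi : ∑ k, M i k * v k = v i := congrFun hv i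
    simp only [mul_sub, Finset.sum_sub_distrib, ← Finset.sum_mul,
      sum_row_of_mem_rowStochastic hM, one_mul, hvi, sub_self]
  have hterm := (Finset.sum_eq_zero_iff_of_nonneg fun k _ =>
    mul_nonneg (nonneg_of_mem_rowStochastic hM) (sub_nonneg.2 (hmax k))).1 hgap j
    (Finset.mem_univ j)
  rw [mul_eq_zero, sub_eq_zero] at hterm
  exact (hterm.resolve_left hij.ne').symm

end Matrix

theorem stmt_9_general {X : Type*} [Fintype X] [DecidableEq X] (P : Matrix X X ℝ)
    (hPnonneg : ∀ x y, 0 ≤ P x y) (hProw : ∀ x, ∑ y, P x y = 1)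
    (hirr : ∀ x y, ∃ n, 1 ≤ n ∧ 0 < (P ^ n) x y)
    (v : X → ℝ) (hv : ∀ x, ∑ y, P x y * v y = v x) :
    ∀ x y, v x = v y := by
  intro x y
  have hP : P ∈ Matrix.rowStochastic ℝ X := Matrix.mem_rowStochastic_iff_sum.2 ⟨hPnonneg, hProw⟩
  have hfix : P.mulVec v = v := funext hv
  have : Nonempty X := ⟨x⟩
  obtain ⟨x₀, hmax⟩ := Finite.exists_max v
  have hconst : ∀ z, v z = v x₀ := fun z => by
    obtain ⟨n, -, hpos⟩ := hirr x₀ z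
    exact Matrix.apply_eq_of_mulVec_eq_self_of_forall_le (pow_mem hP n)
      (Matrix.pow_mulVec_eq_self hfix n) hmax hpos
  rw [hconst x, hconst y]

/-- harmonic functions of an irreducible row-stochastic matrix are constant. -/
theorem stmt_9 {X : Type*} [Fintype X] [DecidableEq X] [Nonempty X] (P : Matrix X X ℝ)
    (hPnonneg : ∀ x y, 0 ≤ P x y) (hProw : ∀ x, ∑ y, P x y = 1)
    (hirr : ∀ x y, ∃ n, 1 ≤ n ∧ 0 < (P ^ n) x y)
    (v : X → ℝ) (hv : ∀ x, ∑ y, P x y * v y = v x) :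
    ∀ x y, v x = v y :=
  stmt_9_general P hPnonneg hProw hirr v hv
end

section
/- (Kac's formula, finite-state linear-algebra form) Let P be an irreducible row-stochastic matrix on a nonempty finite type X with stationary distribution d, and fix x̃ ∈ X. Suppose h : X → ℝ solves the expected-return-time system h(x) = 1 + Σ_{y ≠ x̃} P(x,y)·h(y) for all x ∈ X (so h(x̃) is the mean return time of the chain to x̃). Then d(x̃)·h(x̃) = 1, i.e., the stationary probability of x̃ is the reciprocal of the mean return time to x̃. -/
/-!
Pair the return-time system with the stationary distribution: summing `d x * h x` over all `x`
and using `d P = d` on the right-hand side gives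
`∑ x, d x * h x = 1 + ∑ y ≠ x̃, d y * h y`, and the two sums differ exactly by `d x̃ * h x̃`.
-/

open Finset

theorem sum_compl_mul_eq_of_stationary {X : Type*} [Fintype X] [DecidableEq X]
    (P : Matrix X X ℝ) (d : X → ℝ) (hdstat : ∀ y, ∑ x, d x * P x y = d y)
    (s : Finset X) (c h : X → ℝ) (hh : ∀ x, h x = c x + ∑ y ∈ s, P x y * h y) :
    ∑ y ∈ sᶜ, d y * h y = ∑ x, d x * c x := by
  have hpair : ∑ x, d x * h x = ∑ x, d x * c x + ∑ y ∈ s, d y * h y := by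
    calc ∑ x, d x * h x
        = ∑ x, (d x * c x + ∑ y ∈ s, d x * P x y * h y) := by
          refine sum_congr rfl fun x _ => ?_
          simp only [hh x, mul_add, mul_sum, mul_assoc]
      _ = ∑ x, d x * c x + ∑ y ∈ s, (∑ x, d x * P x y) * h y := by
          simp only [sum_add_distrib, sum_mul]
          rw [sum_comm]
      _ = ∑ x, d x * c x + ∑ y ∈ s, d y * h y := by
          simp only [hdstat]
  linarith [sum_add_sum_compl s fun y => d y * h y]

theorem stmt_14_general {X : Type*} [Fintype X] [DecidableEq X] (P : Matrix X X ℝ)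
    (d : X → ℝ) (hd1 : ∑ x, d x = 1)
    (hdstat : ∀ y, ∑ x, d x * P x y = d y)
    (xt : X) (h : X → ℝ)
    (hret : ∀ x, h x = 1 + ∑ y ∈ Finset.univ \ {xt}, P x y * h y) :
    d xt * h xt = 1 := by
  have hkac := sum_compl_mul_eq_of_stationary P d hdstat (univ \ {xt}) 1 h hret
  have hcompl : (univ \ {xt})ᶜ = {xt} := by ext; simp
  simpa only [hcompl, sum_singleton, Pi.one_apply, mul_one, hd1] using hkac

/-- Kac's formula: if h solves the expected-return-time system for state x̃
of an irreducible row-stochastic matrix with stationary distribution d, then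
d(x̃) · h(x̃) = 1. -/
theorem stmt_14 {X : Type*} [Fintype X] [DecidableEq X] [Nonempty X] (P : Matrix X X ℝ)
    (hPnonneg : ∀ x y, 0 ≤ P x y) (hProw : ∀ x, ∑ y, P x y = 1)
    (hirr : ∀ x y, ∃ n, 1 ≤ n ∧ 0 < (P ^ n) x y)
    (d : X → ℝ) (hd0 : ∀ x, 0 ≤ d x) (hd1 : ∑ x, d x = 1)
    (hdstat : ∀ y, ∑ x, d x * P x y = d y)
    (xt : X) (h : X → ℝ)
    (hret : ∀ x, h x = 1 + ∑ y ∈ Finset.univ \ {xt}, P x y * h y) :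
    d xt * h xt = 1 :=
  stmt_14_general P d hd1 hdstat xt h hret
end

section
/- (Average-reward policy gradient theorem, finite state and action spaces, scalar parameter) Let X and U be nonempty finite types, r : X × U → ℝ a reward, and P : X × U × X → ℝ transition probabilities with P(x,u,·) a probability vector for each (x,u). Let π : ℝ → X × U → ℝ be a parameterized policy, with π(θ)(x,·) a probability vector on U for every θ and x, and let d : ℝ → X → ℝ assign to each θ a probability vector on X that is stationary for the induced chain P_θ(x,x') = Σ_u π(θ)(x,u)·P(x,u,x'), i.e., Σ_x d(θ)(x)·P_θ(x,y) = d(θ)(y) for all θ and y. Define the average reward r̄(θ) = Σ_x Σ_u d(θ)(x)·π(θ)(x,u)·r(x,u). Fix θ₀ ∈ ℝ, and assume: (i) for each (x,u), the map θ ↦ π(θ)(x,u) is differentiable at θ₀ with derivative π'(x,u); (ii) for each x, the map θ ↦ d(θ)(x) is differentiable at θ₀; (iii) Q : X × U → ℝ satisfies the differential Bellman equation Q(x,u) = r(x,u) − r̄(θ₀) + Σ_{x'} P(x,u,x')·V(x') where V(x) = Σ_u π(θ₀)(x,u)·Q(x,u). Then the derivative of r̄ at θ₀ equals Σ_x d(θ₀)(x)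 · Σ_u π'(x,u)·Q(x,u). -/
/-!
Differentiating `r̄ = Σ d π r` gives `Σ w r` with `w = d' π + d π'` the derivative of the
state-action occupancy. Since `Σ_u π = 1` and `Σ_x d = 1`, the state marginal of `w` is `d'` and
has total mass `0`; differentiating stationarity shows that `w` is carried by the transitions to
`d'` again. Substituting the Bellman equation for `r`, the `r̄`-term vanishes and the
continuation term `Σ w P V = Σ d' V` cancels the part `Σ d' V` of `Σ w Q`, leaving `Σ d π' Q`.
-/

open Finset

lemma sum_eq_zero_of_hasDerivAt_of_sum_const {𝕜 ι : Type*} [NontriviallyNormedField 𝕜]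
    (s : Finset ι) {f : ι → 𝕜 → 𝕜} {f' : ι → 𝕜} {c θ₀ : 𝕜}
    (hf : ∀ i ∈ s, HasDerivAt (f i) (f' i) θ₀) (hc : ∀ θ, ∑ i ∈ s, f i θ = c) :
    ∑ i ∈ s, f' i = 0 :=
  (HasDerivAt.fun_sum hf).unique (by simpa only [hc] using hasDerivAt_const θ₀ c)

section PolicyGradient

variable {X U R : Type*} [Fintype U] [CommRing R] (p q : X → U → R) (δ δ' : X → R)

lemma sum_occupancy_deriv_eq (hp : ∀ x, ∑ u, p x u = 1) (hq : ∀ x, ∑ u, q x u = 0) (x : X) :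
    ∑ u, (δ' x * p x u + δ x * q x u) = δ' x := by
  rw [sum_add_distrib, ← mul_sum, ← mul_sum, hp, hq, mul_one, mul_zero, add_zero]

variable [Fintype X]

lemma sum_mul_sub_reward_of_bellman {P : X → U → X → R} {r Q : X → U → R} {V : X → R} {ρ : R}
    (hQ : ∀ x u, Q x u = r x u - ρ + ∑ x', P x u x' * V x') (w : X → U → R) :
    ∑ x, ∑ u, w x u * (Q x u - r x u)
      = ∑ y, (∑ x, ∑ u, w x u * P x u y) * V y - ρ * ∑ x, ∑ u, w x u := by
  have hterm : ∀ x u, w x u * (Q x u - r x u)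
      = ∑ y, w x u * P x u y * V y - ρ * w x u := by
    intro x u
    simp only [hQ, mul_assoc, ← mul_sum]
    ring
  simp only [hterm, sum_sub_distrib, ← mul_sum, sum_mul]
  congr 1
  exact (sum_congr rfl fun x _ => sum_comm).trans sum_comm

lemma sum_occupancy_deriv_mul_transition (P : X → U → X → R) (y : X) :
    ∑ x, ∑ u, (δ' x * p x u + δ x * q x u) * P x u y
      = ∑ x, (δ' x * ∑ u, p x u * P x u y + δ x * ∑ u, q x u * P x u y) := by
  refine sum_congr rfl fun x _ => ?_
  simp only [add_mul, sum_add_distrib, mul_sum, mul_assoc]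

lemma sum_occupancy_deriv_mul_eq (Q : X → U → R) (V : X → R)
    (hV : ∀ x, V x = ∑ u, p x u * Q x u) :
    ∑ x, ∑ u, (δ' x * p x u + δ x * q x u) * Q x u
      = ∑ x, δ' x * V x + ∑ x, δ x * ∑ u, q x u * Q x u := by
  rw [← sum_add_distrib]
  refine sum_congr rfl fun x _ => ?_
  simp only [hV, add_mul, sum_add_distrib, mul_sum, mul_assoc]

/-- The algebraic core of the policy gradient theorem: `p, q` stand for `π(θ₀), π'` and
`δ, δ'` for `d(θ₀), d'`. -/
theorem sum_occupancy_deriv_mul_reward (P : X → U → X → R) (r Q : X → U → R) (V : X → R)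
    (ρ : R) (hp : ∀ x, ∑ u, p x u = 1) (hq : ∀ x, ∑ u, q x u = 0) (hδ' : ∑ x, δ' x = 0)
    (hstat' : ∀ y, ∑ x, (δ' x * ∑ u, p x u * P x u y + δ x * ∑ u, q x u * P x u y) = δ' y)
    (hV : ∀ x, V x = ∑ u, p x u * Q x u)
    (hQ : ∀ x u, Q x u = r x u - ρ + ∑ x', P x u x' * V x') :
    ∑ x, ∑ u, (δ' x * p x u + δ x * q x u) * r x u = ∑ x, δ x * ∑ u, q x u * Q x u := by
  have hmass : ∑ x, ∑ u, (δ' x * p x u + δ x * q x u) = 0 := by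
    simp only [sum_occupancy_deriv_eq p q δ δ' hp hq, hδ']
  have hflow : ∀ y, ∑ x, ∑ u, (δ' x * p x u + δ x * q x u) * P x u y = δ' y := fun y =>
    (sum_occupancy_deriv_mul_transition p q δ δ' P y).trans (hstat' y)
  calc ∑ x, ∑ u, (δ' x * p x u + δ x * q x u) * r x u
      = ∑ x, ∑ u, (δ' x * p x u + δ x * q x u) * Q x u
        - ∑ x, ∑ u, (δ' x * p x u + δ x * q x u) * (Q x u - r x u) := by
        simp only [mul_sub, sum_sub_distrib, sub_sub_cancel]
    _ = (∑ x, δ' x * V x + ∑ x, δ x * ∑ u, q x u * Q x u) - (∑ y, δ' y * V y - ρ * 0) := by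
        rw [sum_occupancy_deriv_mul_eq p q δ δ' Q V hV, sum_mul_sub_reward_of_bellman hQ, hmass]
        simp only [hflow]
    _ = ∑ x, δ x * ∑ u, q x u * Q x u := by ring

end PolicyGradient

theorem stmt_15_general {X U : Type*} [Fintype X] [Fintype U]
    (r : X → U → ℝ)
    (P : X → U → X → ℝ)
    (π : ℝ → X → U → ℝ)
    (hπrow : ∀ θ x, ∑ u, π θ x u = 1)
    (d : ℝ → X → ℝ)
    (hdsum : ∀ θ, ∑ x, d θ x = 1)
    (hdstat : ∀ θ y, ∑ x, d θ x * (∑ u, π θ x u * P x u y) = d θ y)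
    (rbar : ℝ → ℝ)
    (hrbar : ∀ θ, rbar θ = ∑ x, ∑ u, d θ x * π θ x u * r x u)
    (θ₀ : ℝ)
    (π' : X → U → ℝ)
    (hπdiff : ∀ x u, HasDerivAt (fun θ => π θ x u) (π' x u) θ₀)
    (hddiff : ∀ x, DifferentiableAt ℝ (fun θ => d θ x) θ₀)
    (Q : X → U → ℝ) (V : X → ℝ)
    (hV : ∀ x, V x = ∑ u, π θ₀ x u * Q x u)
    (hQ : ∀ x u, Q x u = r x u - rbar θ₀ + ∑ x', P x u x' * V x') :
    HasDerivAt rbar (∑ x, d θ₀ x * ∑ u, π' x u * Q x u) θ₀ := by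
  set d' : X → ℝ := fun x => deriv (fun θ => d θ x) θ₀
  have hd' : ∀ x, HasDerivAt (fun θ => d θ x) (d' x) θ₀ := fun x => (hddiff x).hasDerivAt
  have hπ'sum : ∀ x, ∑ u, π' x u = 0 := fun x =>
    sum_eq_zero_of_hasDerivAt_of_sum_const _ (fun u _ => hπdiff x u) (hπrow · x)
  have hd'sum : ∑ x, d' x = 0 :=
    sum_eq_zero_of_hasDerivAt_of_sum_const _ (fun x _ => hd' x) hdsum
  have hstat' : ∀ y, ∑ x, (d' x * ∑ u, π θ₀ x u * P x u y + d θ₀ x * ∑ u, π' x u * P x u y)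
      = d' y := fun y => by
    have h : HasDerivAt (fun θ => ∑ x, d θ x * ∑ u, π θ x u * P x u y) _ θ₀ :=
      HasDerivAt.fun_sum fun x _ =>
        (hd' x).mul (HasDerivAt.fun_sum fun u _ => (hπdiff x u).mul_const (P x u y))
    rw [funext (hdstat · y)] at h
    exact h.unique (hd' y)
  have hR : HasDerivAt rbar (∑ x, ∑ u, (d' x * π θ₀ x u + d θ₀ x * π' x u) * r x u) θ₀ := by
    rw [funext hrbar]
    exact HasDerivAt.fun_sum fun x _ => HasDerivAt.fun_sum fun u _ =>
      ((hd' x).mul (hπdiff x u)).mul_const (r x u)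
  rwa [sum_occupancy_deriv_mul_reward (π θ₀) π' (d θ₀) d' P r Q V (rbar θ₀)
    (hπrow θ₀) hπ'sum hd'sum hstat' hV hQ] at hR

/-- average-reward policy gradient theorem (finite state/action spaces,
scalar policy parameter). -/
theorem stmt_15 {X U : Type*} [Fintype X] [Fintype U] [Nonempty X] [Nonempty U]
    (r : X → U → ℝ)
    (P : X → U → X → ℝ)
    (hPnonneg : ∀ x u x', 0 ≤ P x u x') (hProw : ∀ x u, ∑ x', P x u x' = 1)
    (π : ℝ → X → U → ℝ)
    (hπnonneg : ∀ θ x u, 0 ≤ π θ x u) (hπrow : ∀ θ x, ∑ u, π θ x u = 1)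
    (d : ℝ → X → ℝ)
    (hdnonneg : ∀ θ x, 0 ≤ d θ x) (hdsum : ∀ θ, ∑ x, d θ x = 1)
    (hdstat : ∀ θ y, ∑ x, d θ x * (∑ u, π θ x u * P x u y) = d θ y)
    (rbar : ℝ → ℝ)
    (hrbar : ∀ θ, rbar θ = ∑ x, ∑ u, d θ x * π θ x u * r x u)
    (θ₀ : ℝ)
    (π' : X → U → ℝ)
    (hπdiff : ∀ x u, HasDerivAt (fun θ => π θ x u) (π' x u) θ₀)
    (hddiff : ∀ x, DifferentiableAt ℝ (fun θ => d θ x) θ₀)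
    (Q : X → U → ℝ) (V : X → ℝ)
    (hV : ∀ x, V x = ∑ u, π θ₀ x u * Q x u)
    (hQ : ∀ x u, Q x u = r x u - rbar θ₀ + ∑ x', P x u x' * V x') :
    HasDerivAt rbar (∑ x, d θ₀ x * ∑ u, π' x u * Q x u) θ₀ :=
  stmt_15_general r P π hπrow d hdsum hdstat rbar hrbar θ₀ π' hπdiff hddiff Q V hV hQ
end
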